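/- Suppose every n-partite correlation in the k-producible non-signaling set NS_{n,k} satisfies the linear inequality ∑_{a,x} β(a,x) P(a|x) ≤ 0, where all constituent groups have size at most k. Let P' be an (n+h)-partite k-producible non-signaling correlation, i.e., P'(a,o|x,s) = ∑_λ q_λ ∏_i P^{NS}_{λ,i} over partitions into groups of size ≤ k, with each constituent non-signaling. Then for any fixed outcomes o and settings s of the h additional parties, ∑_{a,x} β(a,x) P'(a,o|x,s) ≤ 0. -/

import Mathlib

/-!
Fixing the inputs and outputs of the extra parties turns each non-signaling group of a
`k`-producible correlation into a non-signaling group of at most `k` of the remaining parties,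
up to a normalization: by non-signaling, the probability of the fixed outputs given the fixed
inputs does not depend on the inputs of the rest of the group. Hence the lifted correlation is a
nonnegative combination of `k`-producible `n`-partite correlations, and the inequality, being
linear, survives.
-/

/-- The marginal on a subset `S` of parties. -/
noncomputable def marg {I : Type} [Fintype I] [DecidableEq I] {X A : Type} [Fintype A]
    [DecidableEq A] (P : (I → X) → (I → A) → ℝ) (S : Finset I)
    (x : I → X) (b : I → A) : ℝ :=
  ∑ a : I → A, if ∀ j ∈ S, a j = b j then P x a else 0

/-- Non-signaling: every marginal is independent of the complementary inputs. -/
def NonSignaling {I : Type} [Fintype I] [DecidableEq I] {X A : Type} [Fintype A]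
    [DecidableEq A] (P : (I → X) → (I → A) → ℝ) : Prop :=
  ∀ (S : Finset I) (x x' : I → X), (∀ j ∈ S, x j = x' j) →
    ∀ b : I → A, marg P S x b = marg P S x' b

/-- Membership in `NS_{I,k}`: a convex mixture, over partitions of the parties
`I` into groups of size at most `k`, of products of normalized non-signaling
correlations on the groups. -/
def kProducibleNS {I : Type} [Fintype I] [DecidableEq I] {X A : Type} [Fintype A]
    [DecidableEq A] (k : ℕ) (P : (I → X) → (I → A) → ℝ) : Prop :=
  ∃ (N : ℕ) (q : Fin N → ℝ) (G : Fin N → ℕ) (g : ∀ l, I → Fin (G l))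
    (Q : ∀ (l : Fin N) (i : Fin (G l)),
      ({j : I // g l j = i} → X) → ({j : I // g l j = i} → A) → ℝ),
    (∀ l, 0 ≤ q l) ∧ (∑ l, q l = 1) ∧
    (∀ l i, Fintype.card {j : I // g l j = i} ≤ k) ∧
    (∀ l i, (∀ x a, 0 ≤ Q l i x a) ∧ (∀ x, ∑ a, Q l i x a = 1) ∧
      NonSignaling (Q l i)) ∧
    (∀ x a, P x a = ∑ l, q l * ∏ i, Q l i (fun j => x j.1) (fun j => a j.1))

open Function

section Condition

variable {I J X A : Type} [Fintype I] [DecidableEq I] [Fintype J] [DecidableEq J]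
  [Fintype A] [DecidableEq A]

/-- The (unnormalized) correlation of the parties `J`, embedded in `I` by `e`, when the other
parties have inputs `s` and outputs `o`; the values of `s` and `o` on the image of `e` are ignored. -/
noncomputable def condition (P : (I → X) → (I → A) → ℝ) (e : J → I) (s : I → X) (o : I → A) :
    (J → X) → (J → A) → ℝ :=
  fun u v => P (extend e u s) (extend e v o)

def imageUnionCompl (e : J → I) (S : Finset J) : Finset I :=
  Finset.univ.filter fun j => ∀ j', e j' = j → j' ∈ S

theorem mem_imageUnionCompl_of_mem {e : J → I} (he : Injective e) {S : Finset J} {j : J}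
    (hj : j ∈ S) : e j ∈ imageUnionCompl e S := by
  simp only [imageUnionCompl, Finset.mem_filter, Finset.mem_univ, true_and]
  rintro j' hj'
  rwa [he hj']

theorem extend_eq_extend_of_mem_imageUnionCompl {α : Type} {e : J → I} (he : Injective e)
    {S : Finset J} {v b : J → α} (hvb : ∀ j ∈ S, v j = b j) (w : I → α) :
    ∀ j ∈ imageUnionCompl e S, extend e v w j = extend e b w j := by
  intro j hj
  simp only [imageUnionCompl, Finset.mem_filter, Finset.mem_univ, true_and] at hj
  by_cases hrange : ∃ j', e j' = j
  · obtain ⟨j', rfl⟩ := hrange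
    rw [he.extend_apply, he.extend_apply, hvb j' (hj j' rfl)]
  · rw [extend_apply' _ _ _ hrange, extend_apply' _ _ _ hrange]

theorem marg_condition (P : (I → X) → (I → A) → ℝ) {e : J → I} (he : Injective e)
    (s : I → X) (o : I → A) (S : Finset J) (u : J → X) (b : J → A) :
    marg (condition P e s o) S u b
      = marg P (imageUnionCompl e S) (extend e u s) (extend e b o) := by
  simp only [marg, condition, ← Finset.sum_filter]
  refine Finset.sum_nbij' (fun v => extend e v o) (fun a => a ∘ e) ?_ ?_ ?_ ?_ (fun _ _ => rfl)
  · intro v hv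
    simp only [Finset.mem_filter, Finset.mem_univ, true_and] at hv ⊢
    exact extend_eq_extend_of_mem_imageUnionCompl he hv o
  · intro a ha
    simp only [Finset.mem_filter, Finset.mem_univ, true_and] at ha ⊢
    intro j hj
    rw [comp_apply, ha _ (mem_imageUnionCompl_of_mem he hj), he.extend_apply]
  · intro v _
    exact extend_comp he v o
  · intro a ha
    simp only [Finset.mem_filter, Finset.mem_univ, true_and] at ha
    funext j
    by_cases hrange : ∃ j', e j' = j
    · obtain ⟨j', rfl⟩ := hrange
      exact he.extend_apply _ _ _
    · have hj : j ∈ imageUnionCompl e S := by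
        simp only [imageUnionCompl, Finset.mem_filter, Finset.mem_univ, true_and]
        exact fun j' hj' => (hrange ⟨j', hj'⟩).elim
      rw [extend_apply' _ _ _ hrange, ha j hj, extend_apply' _ _ _ hrange]

theorem nonSignaling_condition {P : (I → X) → (I → A) → ℝ} (hP : NonSignaling P)
    {e : J → I} (he : Injective e) (s : I → X) (o : I → A) :
    NonSignaling (condition P e s o) := by
  intro S u u' huu' b
  rw [marg_condition P he, marg_condition P he]
  exact hP _ _ _ (extend_eq_extend_of_mem_imageUnionCompl he huu' s) _

end Condition

section NonSignaling

variable {I X A : Type} [Fintype I] [DecidableEq I] [Fintype A] [DecidableEq A]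

theorem NonSignaling.sum_eq {P : (I → X) → (I → A) → ℝ} (hP : NonSignaling P) (x x' : I → X) :
    ∑ a, P x a = ∑ a, P x' a := by
  rcases isEmpty_or_nonempty (I → A) with hA | ⟨⟨b⟩⟩
  · simp [Finset.univ_eq_empty]
  · simpa [marg] using hP ∅ x x' (by simp) b

theorem NonSignaling.div_const {P : (I → X) → (I → A) → ℝ} (hP : NonSignaling P) (c : ℝ) :
    NonSignaling fun x a => P x a / c := by
  have hmarg : ∀ S x b, marg (fun x a => P x a / c) S x b = marg P S x b / c := by
    intro S x b
    simp only [marg, Finset.sum_div, ite_div, zero_div]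
  intro S x x' hxx' b
  rw [hmarg, hmarg, hP S x x' hxx' b]

end NonSignaling

section Normalize

variable {I J X A : Type} [Fintype J] [DecidableEq J] [Fintype A]
  (Q : (I → X) → (I → A) → ℝ) (e : J → I) (s : I → X) (o : I → A)

/-- The probability of the outputs `o` outside the image of `e` given the inputs `s`; the inputs
`s ∘ e` of the remaining parties are immaterial by `sum_condition_eq_conditionMass`. -/
noncomputable def conditionMass : ℝ :=
  ∑ v, condition Q e s o (s ∘ e) v

noncomputable def normalizedCondition (u : J → X) (v : J → A) : ℝ :=
  condition Q e s o u v / conditionMass Q e s o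

variable {Q e}

theorem conditionMass_nonneg (hQ0 : ∀ x a, 0 ≤ Q x a) : 0 ≤ conditionMass Q e s o :=
  Finset.sum_nonneg fun _ _ => hQ0 _ _

variable [Fintype I] [DecidableEq I] [DecidableEq A]

theorem sum_condition_eq_conditionMass (hQ : NonSignaling Q) (he : Injective e) (u : J → X) :
    ∑ v, condition Q e s o u v = conditionMass Q e s o :=
  (nonSignaling_condition hQ he s o).sum_eq u _

theorem condition_eq_conditionMass_mul (hQ0 : ∀ x a, 0 ≤ Q x a) (hQ : NonSignaling Q)
    (he : Injective e) (u : J → X) (v : J → A) :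
    condition Q e s o u v = conditionMass Q e s o * normalizedCondition Q e s o u v := by
  by_cases hc : conditionMass Q e s o = 0
  · have hzero := (Finset.sum_eq_zero_iff_of_nonneg (f := condition Q e s o u)
      fun _ _ => hQ0 _ _).mp ((sum_condition_eq_conditionMass s o hQ he u).trans hc)
    rw [hzero v (Finset.mem_univ v), hc, zero_mul]
  · exact (mul_div_cancel₀ _ hc).symm

theorem normalizedCondition_spec (hQ0 : ∀ x a, 0 ≤ Q x a) (hQ : NonSignaling Q)
    (he : Injective e) (hc : conditionMass Q e s o ≠ 0) :
    (∀ u v, 0 ≤ normalizedCondition Q e s o u v) ∧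
      (∀ u, ∑ v, normalizedCondition Q e s o u v = 1) ∧
      NonSignaling (normalizedCondition Q e s o) :=
  ⟨fun _ _ => div_nonneg (hQ0 _ _) (conditionMass_nonneg s o hQ0),
    fun u => by
      simp only [normalizedCondition, ← Finset.sum_div, sum_condition_eq_conditionMass s o hQ he,
        div_self hc],
    (nonSignaling_condition hQ he s o).div_const _⟩

end Normalize

section Groups

variable {I J κ : Type} (g : I → κ) (e : J → I) (i : κ)

def groupEmb : {j : J // g (e j) = i} → {j : I // g j = i} :=
  Subtype.map e fun _ h => h

variable {g e i}

theorem groupEmb_injective (he : Injective e) : Injective (groupEmb g e i) :=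
  Subtype.map_injective _ he

theorem extend_groupEmb {α : Type} (he : Injective e) (u : J → α) (w : I → α) :
    extend (groupEmb g e i) (fun j => u j.1) (fun j => w j.1) = fun j => extend e u w j.1 := by
  funext j
  by_cases hrange : ∃ j', e j' = j.1
  · obtain ⟨j', hj'⟩ := hrange
    have hj : j = groupEmb g e i ⟨j', hj' ▸ j.2⟩ := Subtype.ext hj'.symm
    rw [hj, (groupEmb_injective he).extend_apply, groupEmb, Subtype.map_coe, he.extend_apply]
  · have hrange' : ¬∃ j', groupEmb g e i j' = j :=
      fun ⟨j', hj'⟩ => hrange ⟨j'.1, congrArg Subtype.val hj'⟩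
    rw [extend_apply' _ _ _ hrange, extend_apply' _ _ _ hrange']

end Groups

section Producible

variable {I J X A : Type} [Fintype I] [DecidableEq I] [Fintype J] [DecidableEq J]
  [Fintype A] [DecidableEq A]

/-- In each term of the mixture every group is conditioned separately; the product of the
normalizations is the weight, and it vanishes as soon as one of them does. -/
theorem kProducibleNS.exists_condition_eq_sum {k : ℕ} {P : (I → X) → (I → A) → ℝ}
    (hP : kProducibleNS k P) {e : J → I} (he : Injective e) (s : I → X) (o : I → A) :
    ∃ (N : ℕ) (w : Fin N → ℝ) (R : Fin N → (J → X) → (J → A) → ℝ),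
      (∀ l, 0 ≤ w l) ∧ (∀ l, w l ≠ 0 → kProducibleNS k (R l)) ∧
      ∀ u v, condition P e s o u v = ∑ l, w l * R l u v := by
  obtain ⟨N, q, G, g, Q, hq0, -, hk, hQ, hPQ⟩ := hP
  let mass l i := conditionMass (Q l i) (groupEmb (g l) e i) (fun j => s j.1) (fun j => o j.1)
  let R l i :=
    normalizedCondition (Q l i) (groupEmb (g l) e i) (fun j => s j.1) (fun j => o j.1)
  refine ⟨N, fun l => q l * ∏ i, mass l i,
    fun l u v => ∏ i, R l i (fun j => u j.1) (fun j => v j.1), fun l => ?_, fun l hl => ?_,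
    fun u v => ?_⟩
  · exact mul_nonneg (hq0 l) (Finset.prod_nonneg fun i _ => conditionMass_nonneg _ _ (hQ l i).1)
  · have hmass : ∀ i, mass l i ≠ 0 := fun i =>
      Finset.prod_ne_zero_iff.mp (right_ne_zero_of_mul hl) i (Finset.mem_univ i)
    refine ⟨1, fun _ => 1, fun _ => G l, fun _ j => g l (e j), fun _ => R l, fun _ => zero_le_one,
      by simp, fun _ i => ?_, fun _ i => ?_, fun u v => by simp⟩
    · exact (Fintype.card_le_of_injective _ (groupEmb_injective he)).trans (hk l i)
    · exact normalizedCondition_spec _ _ (hQ l i).1 (hQ l i).2.2 (groupEmb_injective he) (hmass i)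
  · simp only [condition, hPQ]
    refine Finset.sum_congr rfl fun l _ => ?_
    rw [mul_assoc, ← Finset.prod_mul_distrib]
    congr 1
    refine Finset.prod_congr rfl fun i _ => ?_
    rw [← condition_eq_conditionMass_mul _ _ (hQ l i).1 (hQ l i).2.2 (groupEmb_injective he)]
    simp only [condition, extend_groupEmb he]

theorem sum_mul_condition_nonpos [Fintype X] {k : ℕ} (β : (J → A) → (J → X) → ℝ)
    (hBell : ∀ P : (J → X) → (J → A) → ℝ, kProducibleNS k P → ∑ x, ∑ a, β a x * P x a ≤ 0)
    {P : (I → X) → (I → A) → ℝ} (hP : kProducibleNS k P) {e : J → I} (he : Injective e)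
    (s : I → X) (o : I → A) :
    ∑ u, ∑ v, β v u * condition P e s o u v ≤ 0 := by
  obtain ⟨N, w, R, hw0, hR, hPR⟩ := hP.exists_condition_eq_sum he s o
  calc ∑ u, ∑ v, β v u * condition P e s o u v
      = ∑ l, w l * ∑ u, ∑ v, β v u * R l u v := by
        simp only [hPR, Finset.mul_sum, Finset.sum_comm (γ := Fin N), mul_left_comm]
    _ ≤ 0 := Finset.sum_nonpos fun l _ => by
        by_cases hl : w l = 0
        · rw [hl, zero_mul]
        · exact mul_nonpos_of_nonneg_of_nonpos (hw0 l) (hBell _ (hR l hl))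

end Producible

theorem extend_castAdd_append {α : Type} {n h : ℕ} (y y₀ : Fin n → α) (z : Fin h → α) :
    extend (Fin.castAdd h) y (Fin.append y₀ z) = Fin.append y z := by
  funext j
  refine Fin.addCases (fun j => ?_) (fun j => ?_) j
  · rw [(Fin.castAdd_injective n h).extend_apply, Fin.append_left]
  · have hrange : ¬∃ j', Fin.castAdd h j' = Fin.natAdd n j := by
      rintro ⟨j', hj'⟩
      have := congrArg Fin.val hj'
      simp only [Fin.val_castAdd, Fin.val_natAdd] at this
      omega
    rw [extend_apply' _ _ _ hrange, Fin.append_right, Fin.append_right]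

/-- if every correlation in the `k`-producible non-signaling set
`NS_{n,k}` satisfies the linear inequality `∑_{a,x} β(a,x) P(a|x) ≤ 0`, then
for every `(n+h)`-partite `k`-producible non-signaling correlation `P'` and
every fixed outcomes `o` and settings `s` of the `h` additional parties, the
lifted inequality `∑_{a,x} β(a,x) P'(a,o|x,s) ≤ 0` holds. -/
theorem stmt_15 {X A : Type} [Fintype X] [Fintype A] [DecidableEq A]
    (n h k : ℕ)
    (β : (Fin n → A) → (Fin n → X) → ℝ)
    (hBell : ∀ P : (Fin n → X) → (Fin n → A) → ℝ, kProducibleNS k P →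
      (∑ x : Fin n → X, ∑ a : Fin n → A, β a x * P x a) ≤ 0)
    (P' : (Fin (n + h) → X) → (Fin (n + h) → A) → ℝ)
    (hP' : kProducibleNS k P')
    (o : Fin h → A) (s : Fin h → X) :
    (∑ x : Fin n → X, ∑ a : Fin n → A,
      β a x * P' (Fin.append x s) (Fin.append a o)) ≤ 0 := by
  rcases isEmpty_or_nonempty (Fin n → X × A) with hXA | ⟨⟨z₀⟩⟩
  · exact (Finset.sum_eq_zero fun x _ => Finset.sum_eq_zero fun a _ =>
      (hXA.false fun j => (x j, a j)).elim).le
  -- `z₀` only fills the background values on the first `n` parties, which `condition` ignores.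
  · have := sum_mul_condition_nonpos β hBell hP' (Fin.castAdd_injective n h)
      (Fin.append (Prod.fst ∘ z₀) s) (Fin.append (Prod.snd ∘ z₀) o)
    simpa only [condition, extend_castAdd_append] using this
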